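/- arXiv:2503.15827 — 3 statements merged into one kernel-verified Lean document; each statement's English description precedes it below -/
import Mathlib

section
/- Let H be a Hermitian operator with simple ground eigenvalue λ₀, ground state projector σ = |ψ₀⟩⟨ψ₀|, and spectral gap Δ > 0. Then for any density matrix ρ, the trace distance satisfies D(ρ,σ) = (1/2)‖ρ - σ‖₁ ≤ sqrt((Tr[Hρ] - λ₀)/Δ). -/
open Matrix
open scoped ComplexOrder

/-- The trace norm `‖A‖₁ = Tr √(AᴴA)` of a complex matrix (its real part; the trace of a
positive semidefinite matrix is real). -/
noncomputable def traceNorm {n : ℕ} (A : Matrix (Fin n) (Fin n) ℂ) : ℝ :=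
  (((Matrix.posSemidef_conjTranspose_mul_self A).1.eigenvectorUnitary : Matrix (Fin n) (Fin n) ℂ) *
    diagonal ((fun x : ℝ => (x : ℂ)) ∘ (Real.sqrt ∘ (Matrix.posSemidef_conjTranspose_mul_self A).1.eigenvalues)) *
    (star (Matrix.posSemidef_conjTranspose_mul_self A).1.eigenvectorUnitary :
      Matrix (Fin n) (Fin n) ℂ)).trace.re

/-!
Let `p = ⟨ψ₀|ρ|ψ₀⟩`. Expanding `Tr(Hρ)` in the eigenbasis of `H` gives `Tr(Hρ) ≥ λ₀ + Δ (1 - p)`,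
so it suffices to show `½‖ρ - σ‖₁ ≤ √(1 - p)`. The traceless Hermitian matrix `A = ρ - σ` is
nonnegative on `ψ₀ᗮ`, hence has at most one negative eigenvalue `μ`, and then `‖A‖₁ = 2|μ|`.
Write `ρ = BᴴB`; for a unit eigenvector `v` of `A` with eigenvalue `μ`,
`μ = ‖Bv‖² - |⟨v, ψ₀⟩|²`. Expanding `ψ₀` in the eigenbasis of `A`, the triangle inequality and
Cauchy–Schwarz bound `p = ‖Bψ₀‖²` by `1 - μ²`.
-/

open scoped InnerProductSpace MatrixOrder
open RCLike

section RealInequalities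

variable {ι : Type*} [Fintype ι] [DecidableEq ι]

theorem sum_abs_eq_two_mul_abs_of_sum_eq_zero {x : ι → ℝ} (hsum : ∑ i, x i = 0) {j : ι}
    (hother : ∀ k ≠ j, 0 ≤ x k) : ∑ i, |x i| = 2 * |x j| := by
  have hj : j ∈ Finset.univ := Finset.mem_univ j
  have hrest : ∑ k ∈ Finset.univ.erase j, |x k| = ∑ k ∈ Finset.univ.erase j, x k :=
    Finset.sum_congr rfl fun k hk => abs_of_nonneg (hother k (Finset.ne_of_mem_erase hk))
  have hrest_nonneg : 0 ≤ ∑ k ∈ Finset.univ.erase j, x k :=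
    Finset.sum_nonneg fun k hk => hother k (Finset.ne_of_mem_erase hk)
  rw [← Finset.add_sum_erase _ _ hj] at hsum ⊢
  rw [hrest, abs_of_nonpos (by linarith)]
  linarith

theorem add_mul_one_sub_le_sum_mul {w μ : ι → ℝ} (hw : ∀ i, 0 ≤ w i) (hw1 : ∑ i, w i = 1)
    {i₀ : ι} {Δ : ℝ} (hgap : ∀ j ≠ i₀, μ i₀ + Δ ≤ μ j) :
    μ i₀ + Δ * (1 - w i₀) ≤ ∑ i, μ i * w i := by
  have hi₀ : i₀ ∈ Finset.univ := Finset.mem_univ i₀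
  have hrest : (μ i₀ + Δ) * (1 - w i₀) ≤ ∑ k ∈ Finset.univ.erase i₀, μ k * w k := by
    rw [← hw1, ← Finset.add_sum_erase _ _ hi₀, add_sub_cancel_left, Finset.mul_sum]
    exact Finset.sum_le_sum fun k hk =>
      mul_le_mul_of_nonneg_right (hgap k (Finset.ne_of_mem_erase hk)) (hw k)
  rw [← Finset.add_sum_erase _ _ hi₀]
  nlinarith

theorem sq_sum_mul_le_one_sub_sq {x y : ι → ℝ} (hx : ∀ i, 0 ≤ x i) (hy : ∀ i, 0 ≤ y i)
    (hx1 : ∑ i, x i ^ 2 = 1) (hy1 : ∑ i, y i ^ 2 = 1) (j : ι) :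
    (∑ i, x i * y i) ^ 2 ≤ 1 - (x j ^ 2 - y j ^ 2) ^ 2 := by
  set s := Finset.univ.erase j
  have hj : j ∈ Finset.univ := Finset.mem_univ j
  have hxs : ∑ k ∈ s, x k ^ 2 = 1 - x j ^ 2 := by
    rw [← hx1, ← Finset.add_sum_erase _ _ hj, add_sub_cancel_left]
  have hys : ∑ k ∈ s, y k ^ 2 = 1 - y j ^ 2 := by
    rw [← hy1, ← Finset.add_sum_erase _ _ hj, add_sub_cancel_left]
  have hx2 : 0 ≤ 1 - x j ^ 2 := hxs ▸ Finset.sum_nonneg fun k _ => sq_nonneg (x k)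
  have hy2 : 0 ≤ 1 - y j ^ 2 := hys ▸ Finset.sum_nonneg fun k _ => sq_nonneg (y k)
  set S := ∑ k ∈ s, x k * y k
  have hS : 0 ≤ S := Finset.sum_nonneg fun k _ => mul_nonneg (hx k) (hy k)
  have hCS : S ^ 2 ≤ (1 - x j ^ 2) * (1 - y j ^ 2) :=
    hxs ▸ hys ▸ Finset.sum_mul_sq_le_sq_mul_sq s x y
  -- AM-GM for `x j ^ 2 * (1 - x j ^ 2)` and `y j ^ 2 * (1 - y j ^ 2)`
  have hAMGM : 2 * (x j * y j * S) ≤ x j ^ 2 * (1 - x j ^ 2) + y j ^ 2 * (1 - y j ^ 2) := by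
    have hxy : 0 ≤ x j * y j := mul_nonneg (hx j) (hy j)
    refine (pow_le_pow_iff_left₀ (by positivity) (by positivity) two_ne_zero).mp ?_
    nlinarith [mul_le_mul_of_nonneg_left hCS (sq_nonneg (x j * y j)),
      sq_nonneg (x j ^ 2 * (1 - x j ^ 2) - y j ^ 2 * (1 - y j ^ 2))]
  rw [← Finset.add_sum_erase _ _ hj]
  nlinarith

end RealInequalities

namespace OrthonormalBasis

variable {𝕜 ι E F : Type*} [RCLike 𝕜] [Fintype ι] [DecidableEq ι]
  [NormedAddCommGroup E] [InnerProductSpace 𝕜 E] [NormedAddCommGroup F] [InnerProductSpace 𝕜 F]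

theorem re_inner_map_add_smul {T : E →ₗ[𝕜] E} (b : OrthonormalBasis ι 𝕜 E)
    {μ : ι → ℝ} (hb : ∀ i, T (b i) = (μ i : 𝕜) • b i) {j k : ι} (hjk : j ≠ k) (α β : 𝕜) :
    re ⟪α • b j + β • b k, T (α • b j + β • b k)⟫_𝕜 = ‖α‖ ^ 2 * μ j + ‖β‖ ^ 2 * μ k := by
  have horth := orthonormal_iff_ite.mp b.orthonormal
  have h : ⟪α • b j + β • b k, T (α • b j + β • b k)⟫_𝕜 =
      ((‖α‖ ^ 2 * μ j + ‖β‖ ^ 2 * μ k : ℝ) : 𝕜) := by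
    simp only [map_add, map_smul, hb, inner_add_left, inner_add_right, inner_smul_left,
      inner_smul_right, horth, if_pos, if_neg hjk, if_neg hjk.symm]
    push_cast
    rw [← RCLike.conj_mul, ← RCLike.conj_mul]
    ring
  rw [h, ofReal_re]

theorem nonneg_or_nonneg_of_re_inner_nonneg {T : E →ₗ[𝕜] E} {ψ : E}
    (hT : ∀ x, ⟪ψ, x⟫_𝕜 = 0 → 0 ≤ re ⟪x, T x⟫_𝕜) (b : OrthonormalBasis ι 𝕜 E) {μ : ι → ℝ}
    (hb : ∀ i, T (b i) = (μ i : 𝕜) • b i) {j k : ι} (hjk : j ≠ k) : 0 ≤ μ j ∨ 0 ≤ μ k := by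
  by_contra! ⟨hj, hk⟩
  have hq := b.re_inner_map_add_smul hb hjk
  by_cases hψj : ⟪ψ, b j⟫_𝕜 = 0
  · have hμj := hq 1 0
    simp only [one_smul, zero_smul, add_zero, norm_one, norm_zero] at hμj
    linarith [hT (b j) hψj]
  · have hx := hT (⟪ψ, b k⟫_𝕜 • b j + (-⟪ψ, b j⟫_𝕜) • b k)
      (by simp only [inner_add_right, inner_smul_right]; ring)
    rw [hq, norm_neg] at hx
    have : 0 < ‖⟪ψ, b j⟫_𝕜‖ := norm_pos_iff.mpr hψj
    nlinarith [sq_nonneg ‖⟪ψ, b k⟫_𝕜‖, mul_pos this this]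

theorem norm_map_sq_le (b : OrthonormalBasis ι 𝕜 E) (g : E →ₗ[𝕜] F)
    (hg : ∑ i, ‖g (b i)‖ ^ 2 = 1) {ψ : E} (hψ : ‖ψ‖ = 1) (j : ι) :
    ‖g ψ‖ ^ 2 ≤ 1 - (‖⟪b j, ψ⟫_𝕜‖ ^ 2 - ‖g (b j)‖ ^ 2) ^ 2 := by
  have hnorm : ‖g ψ‖ ≤ ∑ i, ‖⟪b i, ψ⟫_𝕜‖ * ‖g (b i)‖ :=
    calc ‖g ψ‖ = ‖∑ i, ⟪b i, ψ⟫_𝕜 • g (b i)‖ := by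
          conv_lhs => rw [← b.sum_repr' ψ]
          simp only [map_sum, map_smul]
      _ ≤ ∑ i, ‖⟪b i, ψ⟫_𝕜 • g (b i)‖ := norm_sum_le _ _
      _ = ∑ i, ‖⟪b i, ψ⟫_𝕜‖ * ‖g (b i)‖ := by simp only [norm_smul]
  calc ‖g ψ‖ ^ 2 ≤ (∑ i, ‖⟪b i, ψ⟫_𝕜‖ * ‖g (b i)‖) ^ 2 :=
        pow_le_pow_left₀ (norm_nonneg _) hnorm 2
    _ ≤ _ := sq_sum_mul_le_one_sub_sq (fun _ => norm_nonneg _) (fun _ => norm_nonneg _)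
          (by rw [b.sum_sq_norm_inner_right, hψ, one_pow]) hg j

end OrthonormalBasis

namespace Matrix

variable {𝕜 ι n : Type*} [RCLike 𝕜] [Fintype ι] [Fintype n] [DecidableEq n]

theorem trace_eq_sum_inner_toEuclideanLin (M : Matrix n n 𝕜)
    (b : OrthonormalBasis ι 𝕜 (EuclideanSpace 𝕜 n)) :
    M.trace = ∑ i, ⟪b i, toEuclideanLin M (b i)⟫_𝕜 := by
  rw [← LinearMap.trace_eq_sum_inner, toEuclideanLin_eq_toLin_orthonormal,
    LinearMap.trace_eq_matrix_trace 𝕜 (EuclideanSpace.basisFun n 𝕜).toBasis,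
    LinearMap.toMatrix_toLin]

theorem IsHermitian.toEuclideanLin_eigenvectorBasis {A : Matrix n n 𝕜}
    (hA : A.IsHermitian) (j : n) :
    toEuclideanLin A (hA.eigenvectorBasis j) = (hA.eigenvalues j : 𝕜) • hA.eigenvectorBasis j := by
  ext1
  rw [ofLp_toLpLin, toLin'_apply, hA.mulVec_eigenvectorBasis, WithLp.ofLp_smul,
    RCLike.real_smul_eq_coe_smul (K := 𝕜)]

theorem IsHermitian.re_inner_toEuclideanLin_eigenvectorBasis {A : Matrix n n 𝕜}
    (hA : A.IsHermitian) (j : n) :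
    re ⟪hA.eigenvectorBasis j, toEuclideanLin A (hA.eigenvectorBasis j)⟫_𝕜 = hA.eigenvalues j := by
  rw [hA.toEuclideanLin_eigenvectorBasis, inner_smul_right, inner_self_eq_norm_sq_to_K,
    hA.eigenvectorBasis.orthonormal.1 j]
  simp

theorem PosSemidef.exists_norm_sq_eq_re_inner {ρ : Matrix n n 𝕜} (hρ : ρ.PosSemidef) :
    ∃ g : EuclideanSpace 𝕜 n →ₗ[𝕜] EuclideanSpace 𝕜 n,
      ∀ x, ‖g x‖ ^ 2 = re ⟪x, toEuclideanLin ρ x⟫_𝕜 := by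
  obtain ⟨B, rfl⟩ := CStarAlgebra.nonneg_iff_eq_star_mul_self.mp hρ.nonneg
  refine ⟨toEuclideanLin B, fun x => ?_⟩
  rw [star_eq_conjTranspose, toLpLin_mul_same, LinearMap.comp_apply,
    toEuclideanLin_conjTranspose_eq_adjoint, LinearMap.adjoint_inner_right, inner_self_eq_norm_sq]

theorem re_inner_toEuclideanLin_sub_vecMulVec (ρ : Matrix n n 𝕜) (ψ x : EuclideanSpace 𝕜 n) :
    re ⟪x, toEuclideanLin (ρ - vecMulVec ψ (star ψ)) x⟫_𝕜 =
      re ⟪x, toEuclideanLin ρ x⟫_𝕜 - ‖⟪ψ, x⟫_𝕜‖ ^ 2 := by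
  rw [← InnerProductSpace.symm_toEuclideanLin_rankOne, map_sub, LinearEquiv.apply_symm_apply,
    LinearMap.sub_apply, inner_sub_right, map_sub, ContinuousLinearMap.coe_coe,
    InnerProductSpace.rankOne_apply, inner_smul_right, ← inner_conj_symm x ψ, RCLike.mul_conj,
    ← ofReal_pow, ofReal_re]

theorem IsHermitian.re_trace_mul_eq_sum {H : Matrix n n 𝕜} (hH : H.IsHermitian)
    (ρ : Matrix n n 𝕜) :
    re (H * ρ).trace = ∑ i, hH.eigenvalues i *
      re ⟪hH.eigenvectorBasis i, toEuclideanLin ρ (hH.eigenvectorBasis i)⟫_𝕜 := by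
  rw [trace_mul_comm, trace_eq_sum_inner_toEuclideanLin _ hH.eigenvectorBasis, map_sum]
  simp_rw [toLpLin_mul_same, LinearMap.comp_apply, hH.toEuclideanLin_eigenvectorBasis, map_smul,
    inner_smul_right, re_ofReal_mul]

theorem IsHermitian.one_sub_re_inner_le_div_gap {H ρ : Matrix n n 𝕜} (hH : H.IsHermitian)
    (hρ : ρ.PosSemidef) (hρtr : ρ.trace = 1) {i₀ : n} {Δ : ℝ} (hΔ : 0 < Δ)
    (hgap : ∀ j ≠ i₀, hH.eigenvalues i₀ + Δ ≤ hH.eigenvalues j) :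
    1 - re ⟪hH.eigenvectorBasis i₀, toEuclideanLin ρ (hH.eigenvectorBasis i₀)⟫_𝕜 ≤
      (re (H * ρ).trace - hH.eigenvalues i₀) / Δ := by
  have hw : ∀ i, 0 ≤ re ⟪hH.eigenvectorBasis i, toEuclideanLin ρ (hH.eigenvectorBasis i)⟫_𝕜 :=
    fun i => (isPositive_toEuclideanLin_iff.mpr hρ).re_inner_nonneg_right _
  have hw1 : ∑ i, re ⟪hH.eigenvectorBasis i, toEuclideanLin ρ (hH.eigenvectorBasis i)⟫_𝕜 = 1 := by
    rw [← map_sum, ← trace_eq_sum_inner_toEuclideanLin, hρtr, one_re]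
  rw [le_div_iff₀ hΔ, hH.re_trace_mul_eq_sum]
  linarith [add_mul_one_sub_le_sum_mul hw hw1 hgap]

theorem traceNorm_eq_sum_abs_eigenvalues {n : ℕ} {A : Matrix (Fin n) (Fin n) ℂ}
    (hA : A.IsHermitian) : traceNorm A = ∑ i, |hA.eigenvalues i| := by
  have hP := (posSemidef_conjTranspose_mul_self A).1
  have h1 : traceNorm A = (cfc Real.sqrt (Aᴴ * A)).trace.re := by
    rw [hP.cfc_eq, IsHermitian.cfc, Unitary.conjStarAlgAut_apply]; rfl
  have h2 : cfc Real.sqrt (Aᴴ * A) = cfc (fun x : ℝ => |x|) A := by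
    rw [hA.eq, ← sq, ← cfc_comp_pow (R := ℝ) Real.sqrt 2 A (ha := hA.isSelfAdjoint)]
    congr 1
    funext x
    exact Real.sqrt_sq_eq_abs x
  rw [h1, h2, hA.cfc_eq, IsHermitian.cfc, Unitary.conjStarAlgAut_apply,
    trace_mul_cycle, Unitary.coe_star_mul_self, Matrix.one_mul, trace_diagonal]
  simp

end Matrix

theorem half_traceNorm_sub_vecMulVec_le {n : ℕ} {ρ : Matrix (Fin n) (Fin n) ℂ}
    (hρ : ρ.PosSemidef) (hρtr : ρ.trace = 1) {ψ : EuclideanSpace ℂ (Fin n)} (hψ : ‖ψ‖ = 1) :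
    (1 / 2 : ℝ) * traceNorm (ρ - vecMulVec ψ (star ψ)) ≤
      Real.sqrt (1 - re ⟪ψ, toEuclideanLin ρ ψ⟫_ℂ) := by
  have hA : (ρ - vecMulVec ψ (star ψ)).IsHermitian :=
    hρ.1.sub (posSemidef_vecMulVec_self_star _).1
  obtain ⟨g, hg⟩ := hρ.exists_norm_sq_eq_re_inner
  have hμ : ∀ i, hA.eigenvalues i =
      ‖g (hA.eigenvectorBasis i)‖ ^ 2 - ‖⟪ψ, hA.eigenvectorBasis i⟫_ℂ‖ ^ 2 := fun i => by
    rw [← hA.re_inner_toEuclideanLin_eigenvectorBasis, re_inner_toEuclideanLin_sub_vecMulVec, hg]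
  have hg1 : ∑ i, ‖g (hA.eigenvectorBasis i)‖ ^ 2 = 1 := by
    simp_rw [hg, ← map_sum, ← trace_eq_sum_inner_toEuclideanLin, hρtr, one_re]
  have hμsum : ∑ i, hA.eigenvalues i = 0 := by
    rw [Finset.sum_congr rfl fun i _ => hμ i, Finset.sum_sub_distrib, hg1,
      hA.eigenvectorBasis.sum_sq_norm_inner_left, hψ, one_pow, sub_self]
  have hbound : ∀ j, hA.eigenvalues j ^ 2 ≤ 1 - re ⟪ψ, toEuclideanLin ρ ψ⟫_ℂ := fun j => by
    have := hA.eigenvectorBasis.norm_map_sq_le g hg1 hψ j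
    rw [hg, norm_inner_symm] at this
    rw [hμ]
    linarith
  rw [traceNorm_eq_sum_abs_eigenvalues hA]
  by_cases hneg : ∃ j, hA.eigenvalues j < 0
  · obtain ⟨j, hj⟩ := hneg
    have hpos : ∀ x, ⟪ψ, x⟫_ℂ = 0 →
        0 ≤ re ⟪x, toEuclideanLin (ρ - vecMulVec ψ (star ψ)) x⟫_ℂ := fun x hx => by
      rw [re_inner_toEuclideanLin_sub_vecMulVec, hx, norm_zero, zero_pow two_ne_zero, sub_zero,
        ← hg]
      positivity
    have hother : ∀ k ≠ j, 0 ≤ hA.eigenvalues k := fun k hk =>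
      (hA.eigenvectorBasis.nonneg_or_nonneg_of_re_inner_nonneg hpos
        hA.toEuclideanLin_eigenvectorBasis hk.symm).resolve_left hj.not_ge
    rw [sum_abs_eq_two_mul_abs_of_sum_eq_zero hμsum hother, one_div,
      inv_mul_cancel_left₀ two_ne_zero]
    exact Real.abs_le_sqrt (hbound j)
  · push Not at hneg
    rw [Finset.sum_congr rfl fun i _ => abs_of_nonneg (hneg i), hμsum, mul_zero]
    exact Real.sqrt_nonneg _

/-- If `H` is Hermitian with simple lowest eigenvalue `λ₀`, unit ground
eigenvector `ψ₀`, and spectral gap `Δ > 0`, then for any density matrix `ρ`, the trace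
distance to the ground state projector `σ = |ψ₀⟩⟨ψ₀|` satisfies
`D(ρ,σ) = (1/2)‖ρ - σ‖₁ ≤ √((Tr[Hρ] - λ₀)/Δ)`. -/
theorem trace_distance_le_sqrt_energy_over_gap {n : ℕ}
    (H ρ : Matrix (Fin n) (Fin n) ℂ)
    (hH : H.IsHermitian) (hρ : ρ.PosSemidef) (hρtr : ρ.trace = 1)
    (i₀ : Fin n) (Δ : ℝ) (hΔ : 0 < Δ)
    (hgap : ∀ j : Fin n, j ≠ i₀ → hH.eigenvalues i₀ + Δ ≤ hH.eigenvalues j) :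
    (1/2 : ℝ) * traceNorm (ρ - vecMulVec (hH.eigenvectorBasis i₀ : Fin n → ℂ)
        (star (hH.eigenvectorBasis i₀ : Fin n → ℂ))) ≤
      Real.sqrt ((((H * ρ).trace).re - hH.eigenvalues i₀) / Δ) :=
  (half_traceNorm_sub_vecMulVec_le hρ hρtr (hH.eigenvectorBasis.orthonormal.1 i₀)).trans
    (Real.sqrt_le_sqrt (hH.one_sub_re_inner_le_div_gap hρ hρtr hΔ hgap))
end

section
/- Let f : ℝ → ℂ be integrable, H Hermitian on a finite-dimensional Hilbert space with spectral decomposition H = Σ_i λ_i |ψ_i⟩⟨ψ_i|, and A a bounded operator. Define K = ∫_ℝ f(s) e^{iHs} A e^{-iHs} ds and the Fourier transform f̂(ω) = ∫_ℝ f(s) e^{iωs} ds. Then ⟨ψ_i| K |ψ_j⟩ = f̂(λ_i - λ_j)·⟨ψ_i| A |ψ_j⟩ for all i, j. -/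
/-!
On eigenvectors the conjugation acts diagonally: `e^{-iHs} ψ_j = e^{-iλ_j s} ψ_j` and
`⟨ψ_i| e^{iHs} = e^{iλ_i s} ⟨ψ_i|`, so the `(i, j)` entry of the integrand is
`f(s) e^{i(λ_i - λ_j)s} ⟨ψ_i|A|ψ_j⟩`. Since `e^{±iHs}` is unitary, the integrand is bounded by
`|f(s)| ‖A‖` and hence integrable, and the matrix element, a continuous linear functional,
commutes with the integral.
-/

open Matrix MeasureTheory
open scoped Matrix.Norms.L2Operator

theorem MeasureTheory.Integrable.smul_mul_mul_of_mem_unitary {α 𝕜 E : Type*} [MeasurableSpace α]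
    {μ : Measure α} [NormedField 𝕜] [NormedRing E] [StarRing E] [CStarRing E] [NormedSpace 𝕜 E]
    {f : α → 𝕜} {U V : α → E} (hf : Integrable f μ) (hU : AEStronglyMeasurable U μ)
    (hV : AEStronglyMeasurable V μ) (hUu : ∀ x, U x ∈ unitary E) (hVu : ∀ x, V x ∈ unitary E)
    (A : E) : Integrable (fun x => f x • (U x * A * V x)) μ :=
  hf.smul_bdd ‖A‖ ((hU.mul aestronglyMeasurable_const).mul hV) <| ae_of_all _ fun x => by
    rw [CStarRing.norm_mul_mem_unitary _ (hVu x), CStarRing.norm_mem_unitary_mul _ (hUu x)]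

namespace Matrix

theorem dotProduct_integral_mulVec {m n α : Type*} [Fintype m] [Fintype n] [DecidableEq n]
    [MeasurableSpace α] {μ : Measure α} {F : α → Matrix m n ℂ} (hF : Integrable F μ)
    (u : m → ℂ) (w : n → ℂ) :
    u ⬝ᵥ (∫ x, F x ∂μ) *ᵥ w = ∫ x, u ⬝ᵥ F x *ᵥ w ∂μ :=
  let L : Matrix m n ℂ →ₗ[ℂ] ℂ :=
    { toFun M := u ⬝ᵥ M *ᵥ w
      map_add' M N := by rw [add_mulVec, dotProduct_add]
      map_smul' c M := by rw [smul_mulVec, dotProduct_smul, RingHom.id_apply] }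
  (L.toContinuousLinearMap.integral_comp_comm hF).symm

variable {m 𝕜 : Type*} [Fintype m] [DecidableEq m]

theorem pow_mulVec_of_mulVec_eq_smul [CommSemiring 𝕜] {M : Matrix m m 𝕜} {v : m → 𝕜} {μ : 𝕜}
    (h : M *ᵥ v = μ • v) (k : ℕ) : (M ^ k) *ᵥ v = (μ ^ k) • v := by
  induction k with
  | zero => simp
  | succ k ih => rw [pow_succ, ← mulVec_mulVec, h, mulVec_smul, ih, smul_smul, pow_succ']

variable [RCLike 𝕜]

theorem exp_mulVec_of_mulVec_eq_smul {M : Matrix m m 𝕜} {v : m → 𝕜} {μ : 𝕜}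
    (h : M *ᵥ v = μ • v) : NormedSpace.exp M *ᵥ v = NormedSpace.exp μ • v := by
  have hM := (NormedSpace.exp_series_hasSum_exp' (𝕂 := 𝕜) M).map (mulVec.addMonoidHomLeft v)
    (continuous_id.matrix_mulVec continuous_const)
  refine hM.unique ?_
  simpa only [Function.comp_def, mulVec.addMonoidHomLeft, AddMonoidHom.coe_mk, ZeroHom.coe_mk,
    smul_mulVec, pow_mulVec_of_mulVec_eq_smul h, smul_smul, smul_eq_mul]
    using (NormedSpace.exp_series_hasSum_exp' (𝕂 := 𝕜) μ).smul_const v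

namespace IsHermitian

variable {H : Matrix m m 𝕜}

theorem exp_smul_mem_unitary (hH : H.IsHermitian) {c : 𝕜} (hc : star c = -c) :
    NormedSpace.exp (c • H) ∈ unitary (Matrix m m 𝕜) := by
  have hstar : star (NormedSpace.exp (c • H)) = NormedSpace.exp (-(c • H)) := by
    rw [star_eq_conjTranspose, ← exp_conjTranspose, conjTranspose_smul, hH.eq, hc, neg_smul]
  rw [← unitaryGroup, mem_unitaryGroup_iff, hstar,
    ← exp_add_of_commute _ _ (Commute.refl (c • H)).neg_right, add_neg_cancel,
    NormedSpace.exp_zero]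

theorem star_vecMul_exp_smul (hH : H.IsHermitian) {v : m → 𝕜} {a : ℝ} (hv : H *ᵥ v = a • v)
    (c : 𝕜) : star v ᵥ* NormedSpace.exp (c • H) = NormedSpace.exp (c * a) • star v := by
  have hconj : (NormedSpace.exp (c • H))ᴴ *ᵥ v = NormedSpace.exp (star c * a) • v := by
    rw [← exp_conjTranspose, conjTranspose_smul, hH.eq]
    refine exp_mulVec_of_mulVec_eq_smul ?_
    rw [smul_mulVec, hv, RCLike.real_smul_eq_coe_smul (K := 𝕜), smul_smul]
  rw [← conjTranspose_conjTranspose (NormedSpace.exp (c • H)), ← star_mulVec, hconj, star_smul,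
    NormedSpace.star_exp, star_mul', star_star, RCLike.star_def, RCLike.conj_ofReal]

theorem dotProduct_exp_smul_mul_mul_exp_smul_mulVec (hH : H.IsHermitian) {v w : m → 𝕜}
    {a b : ℝ} (hv : H *ᵥ v = a • v) (hw : H *ᵥ w = b • w) (A : Matrix m m 𝕜) (c d : 𝕜) :
    star v ⬝ᵥ (NormedSpace.exp (c • H) * A * NormedSpace.exp (d • H)) *ᵥ w =
      NormedSpace.exp (c * a + d * b) * (star v ⬝ᵥ A *ᵥ w) := by
  have hw' : NormedSpace.exp (d • H) *ᵥ w = NormedSpace.exp (d * b) • w := by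
    refine exp_mulVec_of_mulVec_eq_smul ?_
    rw [smul_mulVec, hw, RCLike.real_smul_eq_coe_smul (K := 𝕜), smul_smul]
  rw [← mulVec_mulVec, hw', mulVec_smul, ← mulVec_mulVec, dotProduct_smul, dotProduct_mulVec,
    hH.star_vecMul_exp_smul hv, smul_dotProduct, NormedSpace.exp_add, smul_eq_mul, smul_eq_mul]
  ring

end IsHermitian

theorem IsHermitian.integrable_smul_exp_mul_mul_exp_neg {H : Matrix m m ℂ} (hH : H.IsHermitian)
    (A : Matrix m m ℂ) {μ : Measure ℝ} {f : ℝ → ℂ} (hf : Integrable f μ) :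
    Integrable (fun s : ℝ => f s • (NormedSpace.exp ((Complex.I * s) • H) * A *
      NormedSpace.exp ((-(Complex.I * s)) • H))) μ := by
  have hcont : Continuous fun z : ℂ => NormedSpace.exp (z • H) :=
    continuous_iff_continuousAt.2 fun z => (hasDerivAt_exp_smul_const H z).continuousAt
  have hskew (s : ℝ) : star (Complex.I * s) = -(Complex.I * s) := by
    simp [Complex.conj_I, mul_comm]
  exact hf.smul_mul_mul_of_mem_unitary (hcont.comp (by fun_prop)).aestronglyMeasurable
    (hcont.comp (by fun_prop)).aestronglyMeasurable
    (fun s => hH.exp_smul_mem_unitary (hskew s))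
    (fun s => hH.exp_smul_mem_unitary (by rw [star_neg, hskew])) A

end Matrix

/-- For integrable `f`, Hermitian `H` with orthonormal eigenbasis `ψ_i` and
eigenvalues `λ_i`, and any matrix `A`, the operator
`K = ∫ f(s) e^{iHs} A e^{-iHs} ds` has matrix elements
`⟨ψ_i|K|ψ_j⟩ = f̂(λ_i - λ_j) ⟨ψ_i|A|ψ_j⟩`, where `f̂(ω) = ∫ f(s) e^{iωs} ds`. -/
theorem jump_operator_matrix_elements {n : ℕ}
    (H A : Matrix (Fin n) (Fin n) ℂ) (hH : H.IsHermitian)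
    (f : ℝ → ℂ) (hf : Integrable f) (i j : Fin n) :
    star (hH.eigenvectorBasis i : Fin n → ℂ) ⬝ᵥ
        (∫ s : ℝ, f s • (NormedSpace.exp ((Complex.I * (s : ℂ)) • H) * A *
          NormedSpace.exp ((-(Complex.I * (s : ℂ))) • H))).mulVec
        (hH.eigenvectorBasis j : Fin n → ℂ) =
      (∫ s : ℝ, f s * Complex.exp (Complex.I *
          ((hH.eigenvalues i : ℂ) - (hH.eigenvalues j : ℂ)) * s)) *
        (star (hH.eigenvectorBasis i : Fin n → ℂ) ⬝ᵥ
          A.mulVec (hH.eigenvectorBasis j : Fin n → ℂ)) := by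
  rw [dotProduct_integral_mulVec (hH.integrable_smul_exp_mul_mul_exp_neg A hf),
    ← integral_mul_const]
  congr 1 with s
  -- the general lemmas coerce `ℝ → ℂ` through `RCLike.ofReal`, which `ring` does not unfold
  rw [smul_mulVec, dotProduct_smul, hH.dotProduct_exp_smul_mul_mul_exp_smul_mulVec
    (hH.mulVec_eigenvectorBasis i) (hH.mulVec_eigenvectorBasis j), smul_eq_mul,
    Complex.exp_eq_exp_ℂ, RCLike.ofReal_eq_complex_ofReal]
  ring_nf
end

section
/- Let T_i(O) = (1/2) I_i ⊗ Tr_i(O) denote the normalized partial trace on qubit i of an N-qubit system, and δ_i = id - T_i. Then for any operator O on (ℂ²)^{⊗N}: O - (Tr O / 2^N)·I = Σ_{i=1}^N δ_i(T_{i-1} ∘ ⋯ ∘ T_1(O)), and consequently ‖O - (Tr O / 2^N)·I‖ ≤ Σ_{i=1}^N ‖δ_i(O)‖, where ‖·‖ is the operator norm. -/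
open Matrix
open scoped Matrix.Norms.L2Operator

/-- An operator on an `N`-qubit system `(ℂ²)^{⊗N}`. -/
abbrev QubitOp (N : ℕ) := Matrix (Fin N → Fin 2) (Fin N → Fin 2) ℂ

/-- The normalized partial trace channel on qubit `i`: `T_i(O) = (1/2) I_i ⊗ Tr_i(O)`. -/
noncomputable def Tsite {N : ℕ} (i : Fin N) (O : QubitOp N) : QubitOp N :=
  fun x y => if x i = y i then
    (1/2 : ℂ) * ∑ b : Fin 2, O (Function.update x i b) (Function.update y i b)
  else 0

/-- The local oscillation map `δ_i = id - T_i`. -/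
noncomputable def deltaSite {N : ℕ} (i : Fin N) (O : QubitOp N) : QubitOp N :=
  O - Tsite i O

/-- The composition `T_k ∘ ⋯ ∘ T_1` of the first `k` normalized partial traces
(`Tprefix k O = T_k(⋯(T_1(O))⋯)`, with sites numbered from `1`). -/
noncomputable def Tprefix {N : ℕ} : ℕ → QubitOp N → QubitOp N
  | 0, O => O
  | (k + 1), O => if h : k < N then Tsite ⟨k, h⟩ (Tprefix k O) else Tprefix k O

/-!
`δ_i (T_{<i} O) = T_{<i} O - T_{≤i} O`, so the sum telescopes to `O - T_{≤N} O`, and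
`T_{≤N} O = (Tr O / 2^N) I` is read off from an explicit formula for the normalized partial
trace `T_s` over an arbitrary set of sites, which satisfies `T_i ∘ T_s = T_{s ∪ {i}}`.
For the bound, `δ_i` commutes with every `T_j`, `j ≠ i`, hence `δ_i (T_{<i} O) = T_{<i} (δ_i O)`,
and each `T_j` is a contraction for the operator norm because it is the Pauli twirl
`A ↦ ¼ Σ_p σ_p A σ_p` at site `j`, an average of unitary conjugations.
-/

open Function Finset

theorem Fin.sum_filter_forall_ne_eq_sum_update {n : ℕ} {α M : Type*} [DecidableEq α] [Fintype α]
    [AddCommMonoid M] (i : Fin n) (x : Fin n → α) (f : (Fin n → α) → M) :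
    ∑ u with ∀ j, j ≠ i → x j = u j, f u = ∑ a, f (update x i a) := by
  have hfilter : ({u | ∀ j, j ≠ i → x j = u j} : Finset (Fin n → α)) = univ.image (update x i) := by
    ext u
    simp only [mem_filter, mem_univ, true_and, mem_image, update_eq_iff]
    exact ⟨fun h => ⟨u i, rfl, fun j hj => h j hj⟩, fun ⟨_, _, h⟩ => h⟩
  rw [hfilter, Finset.sum_image fun a _ b _ h => update_injective x i h]

theorem Fintype.sum_sum_update {ι α M : Type*} [DecidableEq ι] [Fintype ι] [Fintype α]
    [AddCommMonoid M] (i : ι) (f : (ι → α) → M) :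
    ∑ a, ∑ x, f (update x i a) = Fintype.card α • ∑ x, f x := by
  let e := Equiv.funSplitAt i α
  have hsplit : ∀ a c r, update (e.symm (c, r)) i a = e.symm (a, r) := by
    intro a c r
    ext j
    by_cases hj : j = i
    · subst hj; simp [e, Equiv.funSplitAt, Equiv.piSplitAt]
    · simp [e, Equiv.funSplitAt, Equiv.piSplitAt, hj]
  calc ∑ a, ∑ x, f (update x i a)
      = ∑ a, ∑ c : α, ∑ r, f (e.symm (a, r)) := by
        refine Finset.sum_congr rfl fun a _ => ?_
        rw [← e.symm.sum_comp, Fintype.sum_prod_type]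
        simp only [hsplit]
    _ = Fintype.card α • ∑ p : α × _, f (e.symm p) := by
        rw [Fintype.sum_prod_type, smul_sum]
        simp [sum_const]
    _ = Fintype.card α • ∑ x, f x := by rw [e.symm.sum_comp]

theorem norm_sum_unitary_conj_le {E ι : Type*} [NormedRing E] [StarRing E] [CStarRing E]
    [Fintype ι] (U : ι → unitary E) (A : E) :
    ‖∑ p, (U p : E) * A * star (U p : E)‖ ≤ Fintype.card ι * ‖A‖ := by
  calc ‖∑ p, (U p : E) * A * star (U p : E)‖ ≤ ∑ p, ‖(U p : E) * A * star (U p : E)‖ :=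
        norm_sum_le _ _
    _ = ∑ _p : ι, ‖A‖ := by
        refine Finset.sum_congr rfl fun p _ => ?_
        rw [← Unitary.coe_star, CStarRing.norm_mul_coe_unitary, CStarRing.norm_coe_unitary_mul]
    _ = Fintype.card ι * ‖A‖ := by simp

def pauli : Fin 4 → Matrix (Fin 2) (Fin 2) ℂ :=
  ![1, !![0, 1; 1, 0], !![0, -Complex.I; Complex.I, 0], !![1, 0; 0, -1]]

theorem pauli_mem_unitary (p : Fin 4) : pauli p ∈ unitary (Matrix (Fin 2) (Fin 2) ℂ) := by
  rw [Unitary.mem_iff, Matrix.star_eq_conjTranspose]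
  fin_cases p <;> constructor <;> ext a b <;> fin_cases a <;> fin_cases b <;>
    simp [pauli, Matrix.mul_apply, Fin.sum_univ_two, Matrix.one_apply]

theorem sum_pauli_mul_conj (s t a b : Fin 2) :
    ∑ p, pauli p s a * star (pauli p t b) = if s = t ∧ a = b then 2 else 0 := by
  fin_cases s <;> fin_cases t <;> fin_cases a <;> fin_cases b <;>
    simp [Fin.sum_univ_four, pauli, Complex.ext_iff] <;> norm_num

namespace QubitOp

variable {N : ℕ}

def onSite (i : Fin N) (P : Matrix (Fin 2) (Fin 2) ℂ) : QubitOp N :=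
  Matrix.of fun x y => if ∀ j, j ≠ i → x j = y j then P (x i) (y i) else 0

theorem onSite_mul_apply (i : Fin N) (P : Matrix (Fin 2) (Fin 2) ℂ) (A : QubitOp N)
    (x y : Fin N → Fin 2) :
    (onSite i P * A) x y = ∑ a, P (x i) a * A (update x i a) y := by
  calc (onSite i P * A) x y
      = ∑ u with ∀ j, j ≠ i → x j = u j, P (x i) (u i) * A u y := by
        simp only [Matrix.mul_apply, Finset.sum_filter, onSite, Matrix.of_apply, ite_mul, zero_mul]
    _ = ∑ a, P (x i) a * A (update x i a) y := by
        simp only [Fin.sum_filter_forall_ne_eq_sum_update, update_self]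

theorem mul_onSite_apply (i : Fin N) (P : Matrix (Fin 2) (Fin 2) ℂ) (A : QubitOp N)
    (x y : Fin N → Fin 2) :
    (A * onSite i P) x y = ∑ b, A x (update y i b) * P b (y i) := by
  have hsymm : ∀ u : Fin N → Fin 2, (∀ j, j ≠ i → u j = y j) ↔ ∀ j, j ≠ i → y j = u j :=
    fun u => forall₂_congr fun _ _ => eq_comm
  calc (A * onSite i P) x y
      = ∑ u with ∀ j, j ≠ i → y j = u j, A x u * P (u i) (y i) := by
        simp only [Matrix.mul_apply, Finset.sum_filter, onSite, Matrix.of_apply, mul_ite, mul_zero,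
          hsymm]
    _ = ∑ b, A x (update y i b) * P b (y i) := by
        simp only [Fin.sum_filter_forall_ne_eq_sum_update, update_self]

theorem onSite_mul_onSite (i : Fin N) (P Q : Matrix (Fin 2) (Fin 2) ℂ) :
    onSite i P * onSite i Q = onSite i (P * Q) := by
  ext x y
  have hcond : ∀ a, (∀ j, j ≠ i → update x i a j = y j) ↔ ∀ j, j ≠ i → x j = y j :=
    fun a => forall₂_congr fun j hj => by rw [update_of_ne hj]
  rw [onSite_mul_apply]
  simp only [onSite, Matrix.of_apply, update_self, hcond, mul_ite, mul_zero]
  split_ifs <;> simp [Matrix.mul_apply]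

theorem onSite_one (i : Fin N) : onSite i (1 : Matrix (Fin 2) (Fin 2) ℂ) = 1 := by
  ext x y
  simp only [onSite, Matrix.of_apply, Matrix.one_apply, ← ite_and]
  congr 1
  simp only [eq_iff_iff, funext_iff]
  exact ⟨fun ⟨h, hi⟩ j => if hj : j = i then hj ▸ hi else h j hj, fun h => ⟨fun j _ => h j, h i⟩⟩

theorem conjTranspose_onSite (i : Fin N) (P : Matrix (Fin 2) (Fin 2) ℂ) :
    (onSite i P)ᴴ = onSite i Pᴴ := by
  ext x y
  have hsymm : (∀ j, j ≠ i → y j = x j) ↔ ∀ j, j ≠ i → x j = y j :=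
    forall₂_congr fun _ _ => eq_comm
  simp only [onSite, Matrix.conjTranspose_apply, Matrix.of_apply, hsymm]
  split_ifs <;> simp

theorem onSite_mem_unitary (i : Fin N) {P : Matrix (Fin 2) (Fin 2) ℂ} (hP : P ∈ unitary _) :
    onSite i P ∈ unitary (QubitOp N) := by
  rw [Unitary.mem_iff, Matrix.star_eq_conjTranspose] at hP ⊢
  rw [conjTranspose_onSite, onSite_mul_onSite, onSite_mul_onSite, hP.1, hP.2, onSite_one]
  exact ⟨rfl, rfl⟩

theorem Tsite_eq_pauli_twirl (i : Fin N) (A : QubitOp N) :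
    Tsite i A = (4 : ℂ)⁻¹ • ∑ p, onSite i (pauli p) * A * star (onSite i (pauli p)) := by
  ext x y
  have hterm : ∀ p, (onSite i (pauli p) * A * star (onSite i (pauli p))) x y =
      ∑ a, ∑ b, pauli p (x i) a * star (pauli p (y i) b) * A (update x i a) (update y i b) := by
    intro p
    rw [Matrix.star_eq_conjTranspose, conjTranspose_onSite, mul_onSite_apply]
    simp only [onSite_mul_apply, Matrix.conjTranspose_apply, Finset.sum_mul]
    rw [Finset.sum_comm]
    exact Finset.sum_congr rfl fun a _ => Finset.sum_congr rfl fun b _ => by ring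
  have hpauli : ∀ a b, ∑ p, pauli p (x i) a * star (pauli p (y i) b) *
      A (update x i a) (update y i b) =
      if x i = y i ∧ a = b then 2 * A (update x i a) (update y i b) else 0 := by
    intro a b
    rw [← Finset.sum_mul, sum_pauli_mul_conj, ite_mul, zero_mul]
  simp only [Matrix.smul_apply, Matrix.sum_apply, hterm, smul_eq_mul]
  rw [Finset.sum_comm]
  simp only [Finset.sum_comm (γ := Fin 4), hpauli, Tsite]
  split_ifs with h
  · simp only [one_div, Fin.sum_univ_two, h, true_and, sum_ite_eq, mem_univ, if_true]
    ring
  · simp [h]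

theorem norm_Tsite_le (i : Fin N) (A : QubitOp N) : ‖Tsite i A‖ ≤ ‖A‖ := by
  have hconj := norm_sum_unitary_conj_le
    (fun p => ⟨onSite i (pauli p), onSite_mem_unitary i (pauli_mem_unitary p)⟩) A
  rw [Tsite_eq_pauli_twirl, norm_smul]
  calc ‖(4 : ℂ)⁻¹‖ * ‖∑ p, onSite i (pauli p) * A * star (onSite i (pauli p))‖
      ≤ ‖(4 : ℂ)⁻¹‖ * (4 * ‖A‖) := by gcongr; simpa using hconj
    _ = ‖A‖ := by norm_num [← mul_assoc]

theorem Tsite_sub (i : Fin N) (A B : QubitOp N) : Tsite i (A - B) = Tsite i A - Tsite i B := by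
  ext x y
  by_cases h : x i = y i <;> simp [Tsite, h, mul_sub, Finset.sum_sub_distrib]

theorem Tsite_comm {i j : Fin N} (hij : i ≠ j) (A : QubitOp N) :
    Tsite i (Tsite j A) = Tsite j (Tsite i A) := by
  ext x y
  by_cases hi : x i = y i <;> by_cases hj : x j = y j <;>
    simp only [Tsite, hi, hj, update_of_ne hij, update_of_ne hij.symm, Finset.mul_sum, mul_zero,
      if_true, if_false, Finset.sum_const_zero]
  rw [Finset.sum_comm]
  refine Finset.sum_congr rfl fun a _ => Finset.sum_congr rfl fun b _ => ?_
  rw [update_comm hij, update_comm hij]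

theorem deltaSite_Tsite_comm {i j : Fin N} (hij : i ≠ j) (A : QubitOp N) :
    deltaSite i (Tsite j A) = Tsite j (deltaSite i A) := by
  rw [deltaSite, deltaSite, Tsite_sub, Tsite_comm hij]

theorem Tprefix_succ_of_lt {k : ℕ} (hk : k < N) (A : QubitOp N) :
    Tprefix (k + 1) A = Tsite ⟨k, hk⟩ (Tprefix k A) := dif_pos hk

theorem deltaSite_Tprefix_comm (i : Fin N) {k : ℕ} (hk : k ≤ i) (A : QubitOp N) :
    deltaSite i (Tprefix k A) = Tprefix k (deltaSite i A) := by
  induction k with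
  | zero => rfl
  | succ k ih =>
    have hkN : k < N := by omega
    rw [Tprefix_succ_of_lt hkN, Tprefix_succ_of_lt hkN,
      deltaSite_Tsite_comm (Fin.ne_of_val_ne (by dsimp only; omega)), ih (by omega)]

theorem norm_Tprefix_le (k : ℕ) (A : QubitOp N) : ‖Tprefix k A‖ ≤ ‖A‖ := by
  induction k with
  | zero => exact le_rfl
  | succ k ih =>
    by_cases hk : k < N
    · rw [Tprefix_succ_of_lt hk]
      exact (norm_Tsite_le _ _).trans ih
    · rwa [Tprefix, dif_neg hk]

/-- The normalized partial trace over the sites in `s`. Summing over all configurations `b`,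
rather than over configurations of `s` only, counts each of the latter `2 ^ (N - #s)` times;
hence the factor `2⁻ᴺ`. -/
noncomputable def Tset (s : Finset (Fin N)) (O : QubitOp N) : QubitOp N :=
  Matrix.of fun x y => if ∀ j ∈ s, x j = y j then
    ((2 : ℂ) ^ N)⁻¹ * ∑ b : Fin N → Fin 2, O (s.piecewise b x) (s.piecewise b y)
  else 0

theorem Tset_empty (O : QubitOp N) : Tset ∅ O = O := by
  ext x y
  simp [Tset]

theorem Tsite_Tset {i : Fin N} {s : Finset (Fin N)} (hi : i ∉ s) (O : QubitOp N) :
    Tsite i (Tset s O) = Tset (insert i s) O := by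
  ext x y
  have hpw : ∀ (z b : Fin N → Fin 2) a,
      s.piecewise b (update z i a) = (insert i s).piecewise (update b i a) z := by
    intro z b a
    ext j
    by_cases hj : j = i
    · subst hj; simp [hi]
    · simp [Finset.piecewise, hj]
  have hcond : ∀ a, (∀ j ∈ s, update x i a j = update y i a j) ↔ ∀ j ∈ s, x j = y j :=
    fun a => forall₂_congr fun j hj => by
      rw [update_of_ne (ne_of_mem_of_not_mem hj hi), update_of_ne (ne_of_mem_of_not_mem hj hi)]
  simp only [Tsite, Tset, Matrix.of_apply, hcond, hpw, forall_mem_insert]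
  by_cases hxy : x i = y i
  · by_cases hs : ∀ j ∈ s, x j = y j
    · have hsum := Fintype.sum_sum_update i
        fun b => O ((insert i s).piecewise b x) ((insert i s).piecewise b y)
      simp only [Fintype.card_fin, nsmul_eq_mul, Nat.cast_ofNat] at hsum
      simp only [hxy, if_pos hs, true_and, if_true, ← Finset.mul_sum, hsum]
      ring
    · simp [hs]
  · simp [hxy]

theorem Tset_univ (O : QubitOp N) : Tset univ O = (O.trace / (2 ^ N : ℂ)) • (1 : QubitOp N) := by
  ext x y
  simp only [Tset, Matrix.of_apply, mem_univ, forall_const, piecewise_univ, ← funext_iff,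
    Matrix.smul_apply, Matrix.one_apply, Matrix.trace, Matrix.diag_apply, smul_eq_mul]
  split_ifs <;> simp [div_eq_inv_mul]

theorem Tprefix_eq_Tset (k : ℕ) (O : QubitOp N) :
    Tprefix k O = Tset {j | (j : ℕ) < k} O := by
  induction k with
  | zero => simp [Tprefix, Tset_empty]
  | succ k ih =>
    by_cases hk : k < N
    · rw [Tprefix_succ_of_lt hk, ih, Tsite_Tset (by simp)]
      congr 1
      ext j
      simp only [mem_insert, Fin.ext_iff, mem_filter, mem_univ, true_and, Order.lt_add_one_iff]
      omega
    · rw [Tprefix, dif_neg hk, ih]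
      congr 1
      ext j
      simp only [mem_filter, mem_univ, true_and, Order.lt_add_one_iff]
      omega

theorem Tprefix_self (O : QubitOp N) : Tprefix N O = (O.trace / (2 ^ N : ℂ)) • (1 : QubitOp N) := by
  rw [Tprefix_eq_Tset, ← Tset_univ]
  congr 1
  ext j
  simp

theorem sum_deltaSite_Tprefix (O : QubitOp N) :
    ∑ i : Fin N, deltaSite i (Tprefix i O) = O - Tprefix N O := by
  have hterm : ∀ i : Fin N, deltaSite i (Tprefix i O) = Tprefix i O - Tprefix (i + 1) O :=
    fun i => by rw [Tprefix_succ_of_lt i.isLt]; rfl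
  simp only [hterm]
  rw [Fin.sum_univ_eq_sum_range (fun k => Tprefix k O - Tprefix (k + 1) O),
    Finset.sum_range_sub']
  rfl

end QubitOp

/-- Telescoping identity
`O - (Tr O / 2^N)·I = Σ_{i=1}^N δ_i(T_{i-1} ∘ ⋯ ∘ T_1(O))` and the consequent bound of the
global deviation from a multiple of the identity by the sum of local oscillations, in the
operator norm. -/
theorem global_deviation_le_sum_local_oscillations {N : ℕ} (O : QubitOp N) :
    (O - ((O.trace / (2 ^ N : ℂ)) • (1 : QubitOp N)) =
        ∑ i : Fin N, deltaSite i (Tprefix (i : ℕ) O)) ∧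
      ‖O - ((O.trace / (2 ^ N : ℂ)) • (1 : QubitOp N))‖ ≤
        ∑ i : Fin N, ‖deltaSite i O‖ := by
  have htelescope : O - (O.trace / (2 ^ N : ℂ)) • (1 : QubitOp N) =
      ∑ i : Fin N, deltaSite i (Tprefix (i : ℕ) O) := by
    rw [QubitOp.sum_deltaSite_Tprefix, QubitOp.Tprefix_self]
  refine ⟨htelescope, ?_⟩
  rw [htelescope]
  calc ‖∑ i : Fin N, deltaSite i (Tprefix (i : ℕ) O)‖
      ≤ ∑ i : Fin N, ‖deltaSite i (Tprefix (i : ℕ) O)‖ := norm_sum_le _ _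
    _ ≤ ∑ i : Fin N, ‖deltaSite i O‖ := Finset.sum_le_sum fun i _ => by
        rw [QubitOp.deltaSite_Tprefix_comm i le_rfl]
        exact QubitOp.norm_Tprefix_le _ _
end
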